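/- Under the strict condition on w and uniqueness of the maximizing index k (unless dz(Mw)=0), the pair x* = 𝟙·dz(M_k w)/(M_k 𝟙), u* = sat(u⁰) (with u⁰ the unique equilibrium input) is an optimal solution of the problem: minimize ‖x‖_∞ over (x,u) subject to -x + Bu + w = 0 and -1 ≤ u_i ≤ 1 for all i. In particular the optimal value is |dz(M_k w)|/(M_k 𝟙). -/
import Mathlib


open Finset Matrix

noncomputable def sat (u : ℝ) : ℝ := max (min u 1) (-1)
noncomputable def dz (u : ℝ) : ℝ := u - sat u

lemma sat_of_mem {u : ℝ} (h1 : -1 ≤ u) (h2 : u ≤ 1) : sat u = u := by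
  unfold sat; rw [min_eq_left h2, max_eq_left h1]

lemma sat_of_ge {u : ℝ} (h : 1 ≤ u) : sat u = 1 := by
  unfold sat; rw [min_eq_right h, max_eq_left (by norm_num)]

lemma sat_of_le {u : ℝ} (h : u ≤ -1) : sat u = -1 := by
  unfold sat; rw [min_eq_left (by linarith), max_eq_right h]

lemma sat_mem (u : ℝ) : -1 ≤ sat u ∧ sat u ≤ 1 :=
  ⟨le_max_right _ _, max_le (min_le_right u 1) (by norm_num)⟩

lemma dz_of_mem {u : ℝ} (h1 : -1 ≤ u) (h2 : u ≤ 1) : dz u = 0 := by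
  unfold dz; rw [sat_of_mem h1 h2]; ring

lemma dz_of_gt {u : ℝ} (h : 1 < u) : dz u = u - 1 := by
  unfold dz; rw [sat_of_ge h.le]

lemma dz_of_lt {u : ℝ} (h : u < -1) : dz u = u + 1 := by
  unfold dz; rw [sat_of_le h.le]; ring

lemma mem_of_dz_eq_zero {u : ℝ} (h : dz u = 0) : -1 ≤ u ∧ u ≤ 1 := by
  have : u = sat u := by unfold dz at h; linarith
  rw [this]; exact sat_mem u

theorem stmt11 {n : ℕ} (B M : Matrix (Fin n) (Fin n) ℝ) (w : Fin n → ℝ) (β : ℝ) (k : Fin n)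
    (hβ : 0 < β) (hB : IsUnit B) (hMB : M = B⁻¹)
    (hM : ∀ i j, 0 ≤ M i j) (hrow : ∀ i, 0 < ∑ l, M i l)
    (hw : ∀ i j, (M.mulVec w i - 1) / (∑ l, M i l) < (M.mulVec w j + 1) / (∑ l, M j l))
    (hk : ∀ i, |dz (M.mulVec w i)| / (∑ l, M i l) ≤ |dz (M.mulVec w k)| / (∑ l, M k l))
    (huniq : (∀ i, dz (M.mulVec w i) = 0) ∨
      (∀ i, i ≠ k →
        |dz (M.mulVec w i)| / (∑ l, M i l) < |dz (M.mulVec w k)| / (∑ l, M k l)))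
    (u0 : Fin n → ℝ)
    (hu0k : u0 k = -sat (M.mulVec w k) - dz (M.mulVec w k) / (β * ∑ l, M k l))
    (hu0 : ∀ i, i ≠ k →
      u0 i = -(M.mulVec w i) + ((∑ l, M i l) / (∑ l, M k l)) * dz (M.mulVec w k))
    (xs us : Fin n → ℝ)
    (hxs : ∀ i, xs i = dz (M.mulVec w k) / (∑ l, M k l))
    (hus : ∀ i, us i = sat (u0 i)) :
    ((∀ i, -xs i + B.mulVec us i + w i = 0) ∧ (∀ i, -1 ≤ us i ∧ us i ≤ 1)) ∧
    (∀ x u : Fin n → ℝ,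
      (∀ i, -x i + B.mulVec u i + w i = 0) → (∀ i, -1 ≤ u i ∧ u i ≤ 1) →
      ‖xs‖ ≤ ‖x‖) ∧
    ‖xs‖ = |dz (M.mulVec w k)| / (∑ l, M k l) := by
  have hdet : IsUnit B.det := (Matrix.isUnit_iff_isUnit_det B).mp hB
  have hBM : B * M = 1 := by rw [hMB]; exact Matrix.mul_nonsing_inv B hdet
  have hMBmul : M * B = 1 := by rw [hMB]; exact Matrix.nonsing_inv_mul B hdet
  have hBMv : ∀ v, B.mulVec (M.mulVec v) = v := by
    intro v; rw [Matrix.mulVec_mulVec, hBM, Matrix.one_mulVec]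
  have hMBv : ∀ v, M.mulVec (B.mulVec v) = v := by
    intro v; rw [Matrix.mulVec_mulVec, hMBmul, Matrix.one_mulVec]
  set mw : Fin n → ℝ := M.mulVec w with hmw
  set d : ℝ := dz (mw k) with hd
  have hds : d = mw k - sat (mw k) := hd
  have hmk : (0:ℝ) < ∑ l, M k l := hrow k
  -- if d = 0 then every dz (mw i) = 0
  have Hzero : d = 0 → ∀ i, -1 ≤ mw i ∧ mw i ≤ 1 := by
    intro h0 i
    have h5 := hk i
    rw [h0] at h5
    simp only [abs_zero, zero_div] at h5
    have hmi := hrow i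
    have h6 : |dz (mw i)| ≤ 0 := by
      have := (div_le_iff₀ hmi).mp h5; linarith
    exact mem_of_dz_eq_zero (by rw [← abs_eq_zero]; linarith [abs_nonneg (dz (mw i))])
  -- general bounds
  have Hup : ∀ i, (∑ l, M i l) * d ≤ (mw i + 1) * (∑ l, M k l) := by
    intro i
    have hmi := hrow i
    rcases lt_or_ge 1 (mw k) with h1 | h1
    · have hde : d = mw k - 1 := hd.trans (dz_of_gt h1)
      have h5 := hw k i
      rw [div_lt_div_iff₀ hmk hmi] at h5
      nlinarith
    rcases lt_or_ge (mw k) (-1) with h2 | h2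
    · have hde : d = mw k + 1 := hd.trans (dz_of_lt h2)
      have hdneg : d < 0 := by rw [hde]; linarith
      rcases le_or_gt (-1) (mw i) with h3 | h3
      · nlinarith
      · have h5 := hk i
        rw [div_le_div_iff₀ hmi hmk, dz_of_lt h3,
          abs_of_neg (by linarith : mw i + 1 < 0), abs_of_neg hdneg] at h5
        nlinarith
    · have hde : d = 0 := hd.trans (dz_of_mem h2 h1)
      have h6 := (Hzero hde i).1
      rw [hde]
      nlinarith
  have Hlo : ∀ i, (mw i - 1) * (∑ l, M k l) ≤ (∑ l, M i l) * d := by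
    intro i
    have hmi := hrow i
    rcases lt_or_ge 1 (mw k) with h1 | h1
    · have hde : d = mw k - 1 := hd.trans (dz_of_gt h1)
      have hdpos : 0 < d := by rw [hde]; linarith
      rcases le_or_gt (mw i) 1 with h3 | h3
      · nlinarith
      · have h5 := hk i
        rw [div_le_div_iff₀ hmi hmk, dz_of_gt h3,
          abs_of_pos (by linarith : (0:ℝ) < mw i - 1), abs_of_pos hdpos] at h5
        nlinarith
    rcases lt_or_ge (mw k) (-1) with h2 | h2
    · have hde : d = mw k + 1 := hd.trans (dz_of_lt h2)
      have h5 := hw i k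
      rw [div_lt_div_iff₀ hmi hmk] at h5
      nlinarith
    · have hde : d = 0 := hd.trans (dz_of_mem h2 h1)
      have h6 := (Hzero hde i).2
      rw [hde]
      nlinarith
  -- value of us
  have key : ∀ i, us i = (∑ l, M i l) * (d / ∑ l, M k l) - mw i := by
    intro i
    by_cases hik : i = k
    · subst hik
      have hval : (∑ l, M i l) * (d / ∑ l, M i l) - mw i = -sat (mw i) := by
        rw [mul_comm, div_mul_cancel₀ d (ne_of_gt (hrow i))]
        linarith [hds]
      rw [hval, hus, hu0k]
      have hβm : 0 < β * ∑ l, M i l := by positivity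
      rcases lt_or_ge 1 (mw i) with h1 | h1
      · have hde : d = mw i - 1 := hd.trans (dz_of_gt h1)
        have hdpos : (0:ℝ) < d := by rw [hde]; linarith
        rw [sat_of_ge h1.le]
        have h7 : 0 < d / (β * ∑ l, M i l) := by positivity
        rw [sat_of_le (by linarith)]
      rcases lt_or_ge (mw i) (-1) with h2 | h2
      · have hde : d = mw i + 1 := hd.trans (dz_of_lt h2)
        have hdneg : d < 0 := by rw [hde]; linarith
        rw [sat_of_le h2.le]
        have h7 : d / (β * ∑ l, M i l) < 0 := div_neg_of_neg_of_pos hdneg hβm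
        rw [sat_of_ge (by linarith)]
        norm_num
      · have hde : d = 0 := hd.trans (dz_of_mem h2 h1)
        rw [sat_of_mem h2 h1, hde]
        simp only [zero_div, sub_zero]
        rw [sat_of_mem (by linarith) (by linarith)]
    · have hmi := hrow i
      have hiu := hu0 i hik
      have hmda : (∑ l, M i l) / (∑ l, M k l) * d = (∑ l, M i l) * d / (∑ l, M k l) := by
        ring
      have hb1 : -1 ≤ u0 i := by
        have h5 : (mw i - 1) ≤ (∑ l, M i l) * d / (∑ l, M k l) :=
          (le_div_iff₀ hmk).mpr (Hlo i)
        rw [hiu]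
        linarith [hmda]
      have hb2 : u0 i ≤ 1 := by
        have h5 : (∑ l, M i l) * d / (∑ l, M k l) ≤ mw i + 1 :=
          (div_le_iff₀ hmk).mpr (Hup i)
        rw [hiu]
        linarith [hmda]
      rw [hus, sat_of_mem hb1 hb2, hiu]
      ring
  -- bounds on us
  have husbd : ∀ i, -1 ≤ us i ∧ us i ≤ 1 := by
    intro i
    have he : (∑ l, M i l) * (d / ∑ l, M k l) = (∑ l, M i l) * d / (∑ l, M k l) :=
      (mul_div_assoc _ _ _).symm
    have h5 : (mw i - 1) ≤ (∑ l, M i l) * d / (∑ l, M k l) := (le_div_iff₀ hmk).mpr (Hlo i)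
    have h6 : (∑ l, M i l) * d / (∑ l, M k l) ≤ mw i + 1 := (div_le_iff₀ hmk).mpr (Hup i)
    rw [key i]
    constructor <;> linarith
  -- feasibility equation
  have husM : us = M.mulVec (xs - w) := by
    funext i
    rw [Matrix.mulVec_sub, Pi.sub_apply, key i]
    congr 1
    have h7 : M.mulVec xs i = ∑ l, M i l * (d / ∑ l', M k l') := by
      simp only [Matrix.mulVec, dotProduct]
      exact Finset.sum_congr rfl fun l _ => by rw [hxs l]
    rw [h7, ← Finset.sum_mul]
  have hfeas : ∀ i, -xs i + B.mulVec us i + w i = 0 := by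
    intro i
    have h8 : B.mulVec us = xs - w := by rw [husM, hBMv]
    have := congrFun h8 i
    rw [Pi.sub_apply] at this
    linarith [this]
  -- norm value
  have hnorm : ‖xs‖ = |d| / (∑ l, M k l) := by
    apply le_antisymm
    · apply (pi_norm_le_iff_of_nonneg (by positivity)).mpr
      intro i
      rw [Real.norm_eq_abs, hxs i, abs_div, abs_of_pos hmk]
    · have := norm_le_pi_norm xs k
      rw [Real.norm_eq_abs, hxs k, abs_div, abs_of_pos hmk] at this
      exact this
  refine ⟨⟨hfeas, husbd⟩, ?_, hnorm⟩
  intro x u hxfeas hubd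
  have hBu : B.mulVec u = x - w := by
    funext i
    have := hxfeas i
    rw [Pi.sub_apply]
    linarith
  have huk : u k = M.mulVec x k - mw k := by
    have h1 : u = M.mulVec (x - w) := by rw [← hBu, hMBv]
    rw [h1, Matrix.mulVec_sub, Pi.sub_apply, hmw]
  have habs : |M.mulVec x k| ≤ (∑ l, M k l) * ‖x‖ := by
    calc |M.mulVec x k| = |∑ l, M k l * x l| := rfl
      _ ≤ ∑ l, |M k l * x l| := Finset.abs_sum_le_sum_abs _ _
      _ ≤ ∑ l, M k l * ‖x‖ := by
          refine Finset.sum_le_sum fun l _ => ?_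
          rw [abs_mul, abs_of_nonneg (hM k l)]
          exact mul_le_mul_of_nonneg_left
            (by rw [← Real.norm_eq_abs]; exact norm_le_pi_norm x l) (hM k l)
      _ = (∑ l, M k l) * ‖x‖ := (Finset.sum_mul _ _ _).symm
  rw [hnorm, div_le_iff₀ hmk]
  have hu1 := (hubd k).1
  have hu2 := (hubd k).2
  rcases lt_or_ge 1 (mw k) with h1 | h1
  · have hde : d = mw k - 1 := hd.trans (dz_of_gt h1)
    have habs' : M.mulVec x k ≤ (∑ l, M k l) * ‖x‖ := le_trans (le_abs_self _) habs
    rw [abs_of_pos (by rw [hde]; linarith : (0:ℝ) < d)]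
    have : d ≤ M.mulVec x k := by rw [hde]; linarith
    linarith
  rcases lt_or_ge (mw k) (-1) with h2 | h2
  · have hde : d = mw k + 1 := hd.trans (dz_of_lt h2)
    have habs' : -(M.mulVec x k) ≤ (∑ l, M k l) * ‖x‖ := le_trans (neg_le_abs _) habs
    rw [abs_of_neg (by rw [hde]; linarith : d < 0)]
    have : M.mulVec x k ≤ d := by rw [hde]; linarith
    linarith
  · have hde : d = 0 := hd.trans (dz_of_mem h2 h1)
    rw [hde, abs_zero]
    positivity
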